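/- Assume d = 4k+2 (k ≥ 1) and q ≡ 3 mod 4, and let S_0 ⊂ F_q^d be the zero-radius sphere. Then for any set G ⊂ F_q^d, Σ_{x ∈ S_0} |1̂_G(x)|² ≤ q^{d−1}|G| + q^{(d−2)/2}|G|², where 1̂_G(x) = Σ_{m ∈ G} χ(−x·m). -/

import Mathlib

/-!
Expanding the square turns the left-hand side into `∑_{m, m' ∈ G} Ŝ₀(m' - m)`, where
`Ŝ₀(v) = ∑_{x ∈ S₀} χ(x ⬝ v)`. Detecting `x ⬝ x = 0` by `q⁻¹ ∑_s χ(s (x ⬝ x))` and completing the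
square coordinatewise, the term `s ≠ 0` becomes `χ(-(v ⬝ v) / 4s) (η(s) g)^d`, with `η` the
quadratic character and `g` its Gauss sum. For `q ≡ 3 mod 4` we have `g² = -q`, so for
`d = 4k + 2` this factor is `-q^(2k+1)` for every `s`, and the remaining sum over `s` is elementary:
`Ŝ₀(v) = q^(d-1) [v = 0] - q^(2k) (q [v ⬝ v = 0] - 1) ≤ q^(d-1) [v = 0] + q^(2k)`.
-/

open Finset AddChar

lemma AddChar.map_sum_eq_prod {ι A M : Type*} [AddCommMonoid A] [CommMonoid M]
    (ψ : AddChar A M) (s : Finset ι) (f : ι → A) : ψ (∑ i ∈ s, f i) = ∏ i ∈ s, ψ (f i) := by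
  classical
  induction s using Finset.induction_on with
  | empty => simp
  | insert i s hi ih => rw [sum_insert hi, prod_insert hi, map_add_eq_mul, ih]

lemma AddChar.sum_pi_apply_sum {ι A R : Type*} [Fintype ι] [DecidableEq ι] [AddCommMonoid A]
    [Fintype A] [CommSemiring R] (ψ : AddChar A R) (f : ι → A → A) :
    ∑ x : ι → A, ψ (∑ i, f i (x i)) = ∏ i, ∑ t, ψ (f i t) := by
  simp_rw [map_sum_eq_prod, Fintype.prod_sum]

lemma sum_norm_sq_sum_addChar_neg_dotProduct {R ι : Type*} [CommRing R] [Finite R] [Fintype ι]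
    (ψ : AddChar R ℂ) (S G : Finset (ι → R)) :
    ∑ x ∈ S, ‖∑ m ∈ G, ψ (-(x ⬝ᵥ m))‖ ^ 2 =
      (∑ m ∈ G, ∑ m' ∈ G, ∑ x ∈ S, ψ (x ⬝ᵥ (m' - m))).re := by
  have hpoint : ∀ x : ι → R, ((‖∑ m ∈ G, ψ (-(x ⬝ᵥ m))‖ ^ 2 : ℝ) : ℂ) =
      ∑ m ∈ G, ∑ m' ∈ G, ψ (x ⬝ᵥ (m' - m)) := fun x => by
    rw [Complex.ofReal_pow, ← Complex.mul_conj', map_sum, sum_mul_sum]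
    simp_rw [← map_neg_eq_conj, neg_neg, ← map_add_eq_mul, dotProduct_sub, neg_add_eq_sub]
  rw [← Complex.ofReal_re (∑ x ∈ S, _), Complex.ofReal_sum]
  simp_rw [hpoint]
  rw [sum_comm]
  exact congrArg _ (sum_congr rfl fun _ _ => sum_comm)

lemma sum_sum_le_of_le_ite_add {α : Type*} [DecidableEq α] (G : Finset α) {f : α → α → ℝ}
    {A B : ℝ} (hf : ∀ m m', f m m' ≤ (if m' = m then A else 0) + B) :
    ∑ m ∈ G, ∑ m' ∈ G, f m m' ≤ A * #G + B * #G ^ 2 := calc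
  ∑ m ∈ G, ∑ m' ∈ G, f m m' ≤ ∑ m ∈ G, ∑ m' ∈ G, ((if m' = m then A else 0) + B) := by
    gcongr with m _ m' _
    exact hf m m'
  _ = A * #G + B * #G ^ 2 := by
    simp_rw [sum_add_distrib, sum_ite_eq', sum_const, nsmul_eq_mul]
    rw [sum_ite_mem, inter_self, sum_const, nsmul_eq_mul]
    ring

def zeroSphere (ι F : Type*) [Fintype ι] [DecidableEq ι] [Field F] [Fintype F] [DecidableEq F] :
    Finset (ι → F) :=
  {x | x ⬝ᵥ x = 0}

lemma four_ne_zero_of_ringChar_ne_two {F : Type*} [Field F] (hF : ringChar F ≠ 2) :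
    (4 : F) ≠ 0 := by
  rw [show (4 : F) = 2 ^ 2 by norm_num]
  exact pow_ne_zero 2 (Ring.two_ne_zero hF)

section FiniteField

variable {F : Type*} [Field F] [Fintype F]

lemma ringChar_ne_two_of_card_mod_four_eq_three (hq : Fintype.card F % 4 = 3) :
    ringChar F ≠ 2 := fun h => by
  have := FiniteField.even_card_of_char_two h
  omega

variable [DecidableEq F]

variable (F) in
noncomputable def complexQuadraticChar : MulChar F ℂ :=
  (quadraticChar F).ringHomComp (Int.castRingHom ℂ)

local notation "η" => complexQuadraticChar F

lemma complexQuadraticChar_apply (a : F) : η a = quadraticChar F a := rfl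

lemma complexQuadraticChar_isQuadratic : (η).IsQuadratic :=
  (quadraticChar_isQuadratic F).comp _

lemma complexQuadraticChar_ne_one (hF : ringChar F ≠ 2) : η ≠ 1 :=
  (MulChar.ringHomComp_ne_one_iff Int.cast_injective).mpr (quadraticChar_ne_one hF)

lemma complexQuadraticChar_sq {a : F} (ha : a ≠ 0) : η a ^ 2 = 1 := by
  rw [complexQuadraticChar_apply]
  exact_mod_cast quadraticChar_sq_one ha

lemma complexQuadraticChar_card_sqrts (hF : ringChar F ≠ 2) (a : F) :
    (#{t : F | t ^ 2 = a} : ℂ) = η a + 1 := by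
  have h := quadraticChar_card_sqrts hF a
  rw [Set.toFinset_ofPred] at h
  rw [complexQuadraticChar_apply]
  exact_mod_cast h

lemma gaussSum_complexQuadraticChar_sq (hq : Fintype.card F % 4 = 3) {ψ : AddChar F ℂ}
    (hψ : ψ ≠ 1) : gaussSum η ψ ^ 2 = -Fintype.card F := by
  have hF := ringChar_ne_two_of_card_mod_four_eq_three hq
  rw [gaussSum_sq (complexQuadraticChar_ne_one hF) complexQuadraticChar_isQuadratic
    (IsPrimitive.of_ne_one hψ), complexQuadraticChar_apply, quadraticChar_neg_one hF,
    ZMod.χ₄_nat_three_mod_four hq]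
  push_cast
  ring

lemma sum_addChar_mul_sq (hF : ringChar F ≠ 2) {ψ : AddChar F ℂ} (hψ : ψ ≠ 1) {s : F}
    (hs : s ≠ 0) : ∑ t : F, ψ (s * t ^ 2) = η s * gaussSum η ψ := by
  have hfiber : ∑ t : F, ψ (s * t ^ 2) = ∑ a : F, (η a + 1) * ψ (s * a) := by
    rw [← sum_fiberwise_of_maps_to' (g := fun t : F => t ^ 2) (t := univ)
      (fun _ _ => mem_univ _) (fun a => ψ (s * a))]
    simp_rw [sum_const, nsmul_eq_mul, complexQuadraticChar_card_sqrts hF]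
  have hshift : ∑ a : F, η a * ψ (s * a) = gaussSum η (mulShift ψ s) := by
    simp [gaussSum, mulShift_apply]
  have hzero : ∑ a : F, ψ (a * s) = 0 := by
    rw [sum_mulShift s (IsPrimitive.of_ne_one hψ), if_neg hs, Nat.cast_zero]
  have hg := gaussSum_mulShift η ψ (Ne.isUnit hs).unit
  rw [IsUnit.unit_spec] at hg
  simp_rw [hfiber, add_mul, one_mul, sum_add_distrib, mul_comm s, hzero, add_zero,
    mul_comm _ s, hshift, ← hg, ← mul_assoc, ← sq, complexQuadraticChar_sq hs, one_mul]

lemma sum_addChar_mul_sq_add_mul (hF : ringChar F ≠ 2) {ψ : AddChar F ℂ} (hψ : ψ ≠ 1) {s : F}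
    (hs : s ≠ 0) (c : F) :
    ∑ t : F, ψ (s * t ^ 2 + c * t) = ψ (-c ^ 2 / (4 * s)) * (η s * gaussSum η ψ) := by
  have h2 : (2 : F) ≠ 0 := Ring.two_ne_zero hF
  have h4 := four_ne_zero_of_ringChar_ne_two hF
  have hsq : ∀ t : F, s * (t - c / (2 * s)) ^ 2 + c * (t - c / (2 * s)) =
      -c ^ 2 / (4 * s) + s * t ^ 2 := fun t => by field_simp; ring
  rw [← (Equiv.subRight (c / (2 * s))).sum_comp]
  simp_rw [Equiv.subRight_apply, hsq, map_add_eq_mul, ← mul_sum, sum_addChar_mul_sq hF hψ hs]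

lemma sum_addChar_dotProduct {ι : Type*} [Fintype ι] [DecidableEq ι] {ψ : AddChar F ℂ}
    (hψ : ψ ≠ 1) (v : ι → F) :
    ∑ x : ι → F, ψ (x ⬝ᵥ v) = if v = 0 then (Fintype.card F : ℂ) ^ Fintype.card ι else 0 := by
  simp only [dotProduct]
  rw [sum_pi_apply_sum ψ (fun i t => t * v i)]
  simp_rw [sum_mulShift _ (IsPrimitive.of_ne_one hψ)]
  split_ifs with hv
  · simp [hv]
  · obtain ⟨i, hi⟩ := Function.ne_iff.mp hv
    exact prod_eq_zero (mem_univ i) (by simpa using hi)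

lemma sum_addChar_mul_dotProduct_self_add (hF : ringChar F ≠ 2) {ι : Type*} [Fintype ι]
    [DecidableEq ι] {ψ : AddChar F ℂ} (hψ : ψ ≠ 1) {s : F} (hs : s ≠ 0) (v : ι → F) :
    ∑ x : ι → F, ψ (s * (x ⬝ᵥ x) + x ⬝ᵥ v) =
      ψ (-(v ⬝ᵥ v) / (4 * s)) * (η s * gaussSum η ψ) ^ Fintype.card ι := by
  have hsplit : ∀ x : ι → F, s * (x ⬝ᵥ x) + x ⬝ᵥ v = ∑ i, (s * x i ^ 2 + v i * x i) := by
    intro x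
    simp only [dotProduct, mul_sum, ← sum_add_distrib, sq]
    exact sum_congr rfl fun i _ => by ring
  simp_rw [hsplit, sum_pi_apply_sum ψ (fun i t => s * t ^ 2 + v i * t),
    sum_addChar_mul_sq_add_mul hF hψ hs, prod_mul_distrib, prod_const, card_univ,
    ← mul_pow, ← map_sum_eq_prod, dotProduct, ← sum_div, ← sum_neg_distrib, sq]

lemma sum_erase_zero_addChar_div {ψ : AddChar F ℂ} (hψ : ψ ≠ 1) (c : F) :
    ∑ s ∈ univ.erase 0, ψ (c / s) = (if c = 0 then (Fintype.card F : ℂ) else 0) - 1 := by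
  have hinv : ∑ s : F, ψ (c / s) = ∑ s : F, ψ (s * c) := by
    simp_rw [div_eq_mul_inv, mul_comm c]
    exact Equiv.sum_comp (Equiv.inv F) (fun s => ψ (s * c))
  rw [← sum_erase_add _ _ (mem_univ 0), sum_mulShift c (IsPrimitive.of_ne_one hψ)] at hinv
  simp_rw [div_zero, map_zero_eq_one] at hinv
  push_cast at hinv
  rw [← hinv]
  ring

lemma card_mul_sum_zeroSphere_addChar_dotProduct (hF : ringChar F ≠ 2) {ι : Type*} [Fintype ι]
    [DecidableEq ι] {ψ : AddChar F ℂ} (hψ : ψ ≠ 1) (v : ι → F) :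
    Fintype.card F * ∑ x ∈ zeroSphere ι F, ψ (x ⬝ᵥ v) =
      (if v = 0 then (Fintype.card F : ℂ) ^ Fintype.card ι else 0) +
        ∑ s ∈ univ.erase 0, ψ (-(v ⬝ᵥ v) / (4 * s)) * (η s * gaussSum η ψ) ^ Fintype.card ι := by
  have hdetect : ∀ x : ι → F, (if x ⬝ᵥ x = 0 then (Fintype.card F : ℂ) else 0) =
      ∑ s : F, ψ (s * (x ⬝ᵥ x)) := fun x => by
    rw [sum_mulShift _ (IsPrimitive.of_ne_one hψ)]
    push_cast
    rfl
  calc (Fintype.card F : ℂ) * ∑ x ∈ zeroSphere ι F, ψ (x ⬝ᵥ v)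
      = ∑ x : ι → F, ∑ s : F, ψ (s * (x ⬝ᵥ x) + x ⬝ᵥ v) := by
        simp_rw [zeroSphere, sum_filter, mul_sum, mul_ite, mul_zero, ← ite_zero_mul, hdetect,
          sum_mul, map_add_eq_mul]
    _ = ∑ s : F, ∑ x : ι → F, ψ (s * (x ⬝ᵥ x) + x ⬝ᵥ v) := sum_comm
    _ = _ := by
        rw [← add_sum_erase _ _ (mem_univ 0)]
        simp_rw [zero_mul, zero_add, sum_addChar_dotProduct hψ]
        congr 1
        exact sum_congr rfl fun s hs =>
          sum_addChar_mul_dotProduct_self_add hF hψ (ne_of_mem_erase hs) v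

lemma sum_zeroSphere_addChar_dotProduct (hq : Fintype.card F % 4 = 3) {ι : Type*} [Fintype ι]
    [DecidableEq ι] {k : ℕ} (hι : Fintype.card ι = 4 * k + 2) {ψ : AddChar F ℂ} (hψ : ψ ≠ 1)
    (v : ι → F) :
    ∑ x ∈ zeroSphere ι F, ψ (x ⬝ᵥ v) =
      (((if v = 0 then (Fintype.card F : ℝ) ^ (4 * k + 1) else 0) -
        (Fintype.card F : ℝ) ^ (2 * k) *
          ((if v ⬝ᵥ v = 0 then (Fintype.card F : ℝ) else 0) - 1) : ℝ) : ℂ) := by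
  have hF := ringChar_ne_two_of_card_mod_four_eq_three hq
  have hpow : ∀ s : F, s ≠ 0 →
      (η s * gaussSum η ψ) ^ (4 * k + 2) = -(Fintype.card F : ℂ) ^ (2 * k + 1) := fun s hs => by
    rw [show 4 * k + 2 = 2 * (2 * k + 1) by ring, pow_mul, mul_pow, complexQuadraticChar_sq hs,
      one_mul, gaussSum_complexQuadraticChar_sq hq hψ, Odd.neg_pow ⟨k, rfl⟩]
  refine mul_left_cancel₀ (Nat.cast_ne_zero.mpr Fintype.card_ne_zero : (Fintype.card F : ℂ) ≠ 0) ?_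
  rw [card_mul_sum_zeroSphere_addChar_dotProduct hF hψ, hι,
    sum_congr rfl fun s hs => by rw [hpow s (ne_of_mem_erase hs), div_mul_eq_div_div],
    ← sum_mul, sum_erase_zero_addChar_div hψ]
  simp only [div_eq_zero_iff, neg_eq_zero, four_ne_zero_of_ringChar_ne_two hF, or_false]
  split_ifs <;> push_cast <;> ring

end FiniteField

theorem restriction_zero_sphere_L2_general
    (F : Type) [Field F] [Fintype F] [DecidableEq F]
    (hq : Fintype.card F % 4 = 3)
    (χ : AddChar F ℂ) (hχ : χ ≠ 1) (k : ℕ)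
    (G : Finset (Fin (4 * k + 2) → F)) :
    ∑ x ∈ Finset.univ.filter (fun x : Fin (4 * k + 2) → F => ∑ i, x i * x i = 0),
        ‖∑ m ∈ G, χ (-∑ i, x i * m i)‖ ^ 2 ≤
      (Fintype.card F : ℝ) ^ (4 * k + 1) * G.card +
        (Fintype.card F : ℝ) ^ (2 * k) * (G.card : ℝ) ^ 2 := by
  change ∑ x ∈ zeroSphere (Fin (4 * k + 2)) F, ‖∑ m ∈ G, χ (-(x ⬝ᵥ m))‖ ^ 2 ≤ _
  simp_rw [sum_norm_sq_sum_addChar_neg_dotProduct,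
    sum_zeroSphere_addChar_dotProduct hq (Fintype.card_fin _) hχ, ← Complex.ofReal_sum,
    Complex.ofReal_re, sub_eq_zero]
  refine sum_sum_le_of_le_ite_add G fun m m' => ?_
  have hq0 : (0 : ℝ) ≤ Fintype.card F := Nat.cast_nonneg _
  split_ifs <;> nlinarith [pow_nonneg hq0 (2 * k)]

/-- For `d = 4k+2`, `k ≥ 1`, `q ≡ 3 mod 4`, and any `G ⊂ F_q^d`:
`Σ_{x ∈ S_0} |1̂_G(x)|² ≤ q^{d−1}|G| + q^{(d−2)/2}|G|²`. -/
theorem restriction_zero_sphere_L2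
    (F : Type) [Field F] [Fintype F] [DecidableEq F]
    (hq : Fintype.card F % 4 = 3)
    (χ : AddChar F ℂ) (hχ : χ ≠ 1) (k : ℕ) (hk : 1 ≤ k)
    (G : Finset (Fin (4 * k + 2) → F)) :
    ∑ x ∈ Finset.univ.filter (fun x : Fin (4 * k + 2) → F => ∑ i, x i * x i = 0),
        ‖∑ m ∈ G, χ (-∑ i, x i * m i)‖ ^ 2 ≤
      (Fintype.card F : ℝ) ^ (4 * k + 1) * G.card +
        (Fintype.card F : ℝ) ^ (2 * k) * (G.card : ℝ) ^ 2 :=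
  restriction_zero_sphere_L2_general F hq χ hχ k G
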